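/- arXiv:2007.02596 — 3 statements merged into one kernel-verified Lean document; each statement's English description precedes it below -/
import Mathlib

section
/- Let d ≥ 1, n ≥ 1, a > 0 and let y_1, …, y_n ∈ ℝ^d. Let ψ_n(t) = (1/n) Σ_{j=1}^n exp(i tᵀ y_j) with gradient ∇ψ_n(t) = (1/n) Σ_{j=1}^n i y_j exp(i tᵀ y_j). Then n ∫_{ℝ^d} ‖∇ψ_n(t) + t ψ(t)‖²_ℂ exp(−a‖t‖²) dt = ∫_{ℝ^d} ‖ (1/√n) Σ_{j=1}^n ( y_j (cos(tᵀ y_j) + sin(tᵀ y_j)) − t ψ(t) ) ‖² exp(−a‖t‖²) dt, where the norm on the right-hand side is the Euclidean norm on ℝ^d. -/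
open MeasureTheory Real

/-- The characteristic function of the standard `d`-variate normal distribution. -/
noncomputable def stdNormalCF {d : ℕ} (t : EuclideanSpace ℝ (Fin d)) : ℝ :=
  Real.exp (-‖t‖ ^ 2 / 2)

/-- Gradient of the empirical characteristic function of the points `y 1, …, y n`:
`∇ψ_n(t) = (1/n) ∑_j i y_j exp(i tᵀ y_j)`, viewed as a vector in `ℂ^d`. -/
noncomputable def gradEmpCF {d n : ℕ} (y : Fin n → EuclideanSpace ℝ (Fin d))
    (t : EuclideanSpace ℝ (Fin d)) : EuclideanSpace ℂ (Fin d) :=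
  WithLp.toLp 2 fun k => (n : ℂ)⁻¹ * ∑ j, Complex.I * (y j k : ℂ) *
    Complex.exp (Complex.I * ((inner ℝ t (y j) : ℝ) : ℂ))

/-- The vector `t ψ(t)` viewed in `ℂ^d`. -/
noncomputable def tPsiC {d : ℕ} (t : EuclideanSpace ℝ (Fin d)) : EuclideanSpace ℂ (Fin d) :=
  WithLp.toLp 2 fun k => ((stdNormalCF t * t k : ℝ) : ℂ)

/-!
With `C(t) = ∑ⱼ cos(tᵀyⱼ) yⱼ` and `S(t) = ∑ⱼ sin(tᵀyⱼ) yⱼ`, the real and imaginary parts of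
`∇ψₙ(t) + tψ(t)` are `tψ(t) - S(t)/n` and `C(t)/n`, so the left integrand is
`(‖C‖² + ‖S - nψ t‖²) w / n`. On the right, `√n Zₙ(t) = C + (S - nψ t)`, and since `C` is even
while `S` and `t` are odd, `√n Zₙ(-t) = C - (S - nψ t)`. By the parallelogram law the left
integrand is therefore the average of `‖Zₙ(t)‖² w(t)` and `‖Zₙ(-t)‖² w(-t)`, and Lebesgue measure
is invariant under `t ↦ -t`. Nonnegativity makes both sides integrable or not together, so the
identity also holds for the junk value `0` of a non-integrable integral.
-/

theorem EuclideanSpace.norm_sq_eq_of_apply_eq_add_mul_I {ι : Type*} [Fintype ι]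
    {z : EuclideanSpace ℂ ι} {u v : EuclideanSpace ℝ ι} (h : ∀ k, z k = u k + v k * Complex.I) :
    ‖z‖ ^ 2 = ‖u‖ ^ 2 + ‖v‖ ^ 2 := by
  simp only [EuclideanSpace.norm_sq_eq, h, Complex.sq_norm, Complex.normSq_add_mul_I,
    Real.norm_eq_abs, sq_abs, Finset.sum_add_distrib]

theorem Complex.I_mul_mul_exp_I_mul (c θ : ℝ) :
    I * c * exp (I * θ) = ((-(c * Real.sin θ) : ℝ) : ℂ) + ((c * Real.cos θ : ℝ) : ℂ) * I := by
  rw [mul_comm I (θ : ℂ), exp_mul_I]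
  push_cast [← ofReal_cos, ← ofReal_sin]
  linear_combination (c * Real.sin θ : ℂ) * I_sq

section TrigSums

variable {F : Type*} [NormedAddCommGroup F] [InnerProductSpace ℝ F] {n : ℕ}

noncomputable def cosSum (y : Fin n → F) (t : F) : F := ∑ j, Real.cos (inner ℝ t (y j)) • y j

noncomputable def sinSum (y : Fin n → F) (t : F) : F := ∑ j, Real.sin (inner ℝ t (y j)) • y j

@[simp]
theorem cosSum_neg (y : Fin n → F) (t : F) : cosSum y (-t) = cosSum y t := by
  simp [cosSum]

@[simp]
theorem sinSum_neg (y : Fin n → F) (t : F) : sinSum y (-t) = -sinSum y t := by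
  simp [sinSum]

end TrigSums

section

variable {d n : ℕ} (y : Fin n → EuclideanSpace ℝ (Fin d)) (t : EuclideanSpace ℝ (Fin d))

noncomputable def realZn : EuclideanSpace ℝ (Fin d) :=
  (Real.sqrt n)⁻¹ • ∑ j, ((Real.cos (inner ℝ t (y j) : ℝ) + Real.sin (inner ℝ t (y j) : ℝ)) • y j
    - stdNormalCF t • t)

@[simp]
theorem stdNormalCF_neg : stdNormalCF (-t) = stdNormalCF t := by
  simp [stdNormalCF]

theorem realZn_eq :
    realZn y t = (Real.sqrt n)⁻¹ • (cosSum y t + sinSum y t - (n : ℝ) • stdNormalCF t • t) := by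
  simp [realZn, cosSum, sinSum, Finset.sum_sub_distrib, add_smul, Finset.sum_add_distrib,
    Nat.cast_smul_eq_nsmul]

theorem realZn_neg :
    realZn y (-t)
      = (Real.sqrt n)⁻¹ • (cosSum y t - (sinSum y t - (n : ℝ) • stdNormalCF t • t)) := by
  rw [realZn_eq, cosSum_neg, sinSum_neg, stdNormalCF_neg, smul_neg, smul_neg]
  abel_nf

theorem norm_sq_realZn_add_norm_sq_realZn_neg :
    ‖realZn y t‖ ^ 2 + ‖realZn y (-t)‖ ^ 2
      = 2 * (n : ℝ)⁻¹ * (‖cosSum y t‖ ^ 2 + ‖sinSum y t - (n : ℝ) • stdNormalCF t • t‖ ^ 2) := by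
  rw [realZn_eq, add_sub_assoc, realZn_neg, norm_smul, norm_smul, mul_pow, mul_pow,
    ← mul_add, parallelogram_law_with_norm ℝ, norm_inv, Real.norm_of_nonneg (Real.sqrt_nonneg _),
    inv_pow, Real.sq_sqrt (Nat.cast_nonneg n)]
  ring

theorem gradEmpCF_apply (k : Fin d) :
    gradEmpCF y t k = ((-((n : ℝ)⁻¹ • sinSum y t) k : ℝ) : ℂ)
      + ((((n : ℝ)⁻¹ • cosSum y t) k : ℝ) : ℂ) * Complex.I := by
  simp only [gradEmpCF, Complex.I_mul_mul_exp_I_mul, cosSum, sinSum]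
  simp [Finset.sum_add_distrib, Finset.mul_sum, mul_add, mul_comm, mul_left_comm]

theorem norm_sq_gradEmpCF_add_tPsiC :
    ‖gradEmpCF y t + tPsiC t‖ ^ 2
      = ‖stdNormalCF t • t - (n : ℝ)⁻¹ • sinSum y t‖ ^ 2 + ‖(n : ℝ)⁻¹ • cosSum y t‖ ^ 2 :=
  EuclideanSpace.norm_sq_eq_of_apply_eq_add_mul_I fun k => by
    simp [gradEmpCF_apply, tPsiC]
    ring

theorem natCast_mul_norm_sq_gradEmpCF_add_tPsiC (hn : n ≠ 0) :
    n * ‖gradEmpCF y t + tPsiC t‖ ^ 2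
      = (‖realZn y t‖ ^ 2 + ‖realZn y (-t)‖ ^ 2) / 2 := by
  have hn' : (n : ℝ) ≠ 0 := Nat.cast_ne_zero.mpr hn
  have hsin : stdNormalCF t • t - (n : ℝ)⁻¹ • sinSum y t
      = (-(n : ℝ)⁻¹) • (sinSum y t - (n : ℝ) • stdNormalCF t • t) := by
    rw [smul_sub, smul_smul, neg_mul, inv_mul_cancel₀ hn']
    module
  rw [norm_sq_realZn_add_norm_sq_realZn_neg, norm_sq_gradEmpCF_add_tPsiC, hsin,
    norm_smul, norm_smul, norm_neg, norm_inv, Real.norm_natCast]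
  field_simp
  ring

end

theorem integral_add_comp_neg_div_two {G : Type*} [MeasurableSpace G] [AddGroup G]
    [MeasurableNeg G] {μ : Measure G} [μ.IsNegInvariant] {g : G → ℝ} (hg_nonneg : ∀ x, 0 ≤ g x)
    (hg_meas : AEStronglyMeasurable g μ) :
    ∫ x, (g x + g (-x)) / 2 ∂μ = ∫ x, g x ∂μ := by
  by_cases hg : Integrable g μ
  · rw [integral_div, integral_add hg hg.comp_neg, integral_neg_eq_self]
    ring
  · refine (integral_undef fun h => hg ?_).trans (integral_undef hg).symm
    refine (h.const_mul 2).mono' hg_meas (Filter.Eventually.of_forall fun x => ?_)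
    rw [Real.norm_of_nonneg (hg_nonneg x)]
    linarith [hg_nonneg (-x)]

theorem continuous_realZn {d n : ℕ} (y : Fin n → EuclideanSpace ℝ (Fin d)) :
    Continuous (realZn y) := by
  unfold realZn stdNormalCF
  fun_prop

theorem test_statistic_real_process_representation_general
    (d n : ℕ) (hn : 1 ≤ n) (a : ℝ)
    (y : Fin n → EuclideanSpace ℝ (Fin d)) :
    (n : ℝ) * ∫ t : EuclideanSpace ℝ (Fin d),
        ‖gradEmpCF y t + tPsiC t‖ ^ 2 * Real.exp (-a * ‖t‖ ^ 2)
      = ∫ t : EuclideanSpace ℝ (Fin d),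
          ‖(Real.sqrt n)⁻¹ •
              ∑ j, ((Real.cos (inner ℝ t (y j) : ℝ) + Real.sin (inner ℝ t (y j) : ℝ)) • y j
                - stdNormalCF t • t)‖ ^ 2 * Real.exp (-a * ‖t‖ ^ 2) := by
  set w : EuclideanSpace ℝ (Fin d) → ℝ := fun t => Real.exp (-a * ‖t‖ ^ 2)
  have hw_neg (t) : w (-t) = w t := by simp only [w, norm_neg]
  have hw_cont : Continuous w := by fun_prop
  rw [← integral_const_mul]
  calc ∫ t, (n : ℝ) * (‖gradEmpCF y t + tPsiC t‖ ^ 2 * w t)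
      = ∫ t, (‖realZn y t‖ ^ 2 * w t + ‖realZn y (-t)‖ ^ 2 * w (-t)) / 2 := by
        congr with t
        rw [← mul_assoc, natCast_mul_norm_sq_gradEmpCF_add_tPsiC y t (by omega), hw_neg]
        ring
    _ = ∫ t, ‖realZn y t‖ ^ 2 * w t :=
        integral_add_comp_neg_div_two (fun t => by positivity)
          ((continuous_realZn y).norm.pow 2 |>.mul hw_cont).aestronglyMeasurable

/-- Equation (3.1)/(3.2). The test statistic equals
`∫ ‖Z_n(t)‖² w_a(t) dt` with the real-valued process
`Z_n(t) = n^{-1/2} ∑_j ( y_j (cos(tᵀy_j) + sin(tᵀy_j)) - t ψ(t) )`. -/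
theorem test_statistic_real_process_representation
    (d n : ℕ) (hd : 1 ≤ d) (hn : 1 ≤ n) (a : ℝ) (ha : 0 < a)
    (y : Fin n → EuclideanSpace ℝ (Fin d)) :
    (n : ℝ) * ∫ t : EuclideanSpace ℝ (Fin d),
        ‖gradEmpCF y t + tPsiC t‖ ^ 2 * Real.exp (-a * ‖t‖ ^ 2)
      = ∫ t : EuclideanSpace ℝ (Fin d),
          ‖(Real.sqrt n)⁻¹ •
              ∑ j, ((Real.cos (inner ℝ t (y j) : ℝ) + Real.sin (inner ℝ t (y j) : ℝ)) • y j
                - stdNormalCF t • t)‖ ^ 2 * Real.exp (-a * ‖t‖ ^ 2) :=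
  test_statistic_real_process_representation_general d n hn a y
end

section
/- Let d ≥ 1, a > 0 and x ∈ ℝ^d. Then the vector-valued integral ∫_{ℝ^d} t ψ(t) CS⁺(t,x) exp(−a‖t‖²) dt = ( (2π)^{d/2} / (2a+1)^{d/2+1} ) · x · exp(−‖x‖²/(4a+2)). -/
open MeasureTheory Real

/-- `CS⁺(t,x) = cos(tᵀx) + sin(tᵀx)`. -/
noncomputable def CSplus {d : ℕ} (t x : EuclideanSpace ℝ (Fin d)) : ℝ :=
  Real.cos (inner ℝ t x : ℝ) + Real.sin (inner ℝ t x : ℝ)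

/-!
Put `b = a + 1/2`. Then `ψ(t) e^{-a‖t‖²} CS⁺(t,x) t = e^{-b‖t‖²} (cos⟪t,x⟫ + sin⟪t,x⟫) t`, whose
pairing with a vector `v` is the real part of `(1 - i) ⟪v,t⟫ g(t)` for the Gaussian character
`g(t) = exp(-b‖t‖² + i⟪x,t⟫)`. The derivative of `g` in direction `v` is
`(-2b⟪v,t⟫ + i⟪v,x⟫) g(t)` and integrates to zero, so `∫ ⟪v,t⟫ g = i⟪v,x⟫/(2b) ∫ g`, and
`∫ g = (π/b)^{d/2} e^{-‖x‖²/(4b)}` is the Fourier transform of a Gaussian.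
-/

open Complex (I)
open scoped Complex InnerProductSpace

lemma mul_exp_neg_mul_sq_le {b : ℝ} (hb : 0 < b) (u : ℝ) :
    u * rexp (-b * u ^ 2) ≤ (√b)⁻¹ * rexp (-(b / 2) * u ^ 2) := by
  -- `y ≤ 1 + y² / 2 ≤ exp (y² / 2)` with `y = √b * u`
  have hsqrt_mul_le : √b * u ≤ rexp (b / 2 * u ^ 2) := by
    have hsq : (√b * u) ^ 2 = b * u ^ 2 := by rw [mul_pow, sq_sqrt hb.le]
    nlinarith [add_one_le_exp (b / 2 * u ^ 2), sq_nonneg (√b * u - 1)]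
  calc u * rexp (-b * u ^ 2) = (√b)⁻¹ * (√b * u) * rexp (-b * u ^ 2) := by field_simp
    _ ≤ (√b)⁻¹ * rexp (b / 2 * u ^ 2) * rexp (-b * u ^ 2) := by gcongr
    _ = (√b)⁻¹ * rexp (-(b / 2) * u ^ 2) := by rw [mul_assoc, ← exp_add]; ring_nf

lemma cos_add_sin_eq_re (θ : ℝ) : cos θ + sin θ = ((1 - I) * cexp (I * θ)).re := by
  rw [mul_comm I, Complex.exp_mul_I]
  simp [Complex.cos_ofReal_re, Complex.sin_ofReal_re]

variable {V : Type*} [NormedAddCommGroup V] [InnerProductSpace ℝ V]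

lemma norm_cexp_neg_mul_sq_norm_add_I_mul (b : ℂ) (w t : V) :
    ‖cexp (-b * ‖t‖ ^ 2 + I * ⟪w, t⟫_ℝ)‖ = rexp (-b.re * ‖t‖ ^ 2) := by
  rw [Complex.norm_exp]
  congr 1
  simp [← Complex.ofReal_pow]

lemma hasLineDerivAt_cexp_neg_mul_sq_norm_add_I_mul (b : ℂ) (w t v : V) :
    HasLineDerivAt ℝ (fun t : V ↦ cexp (-b * ‖t‖ ^ 2 + I * ⟪w, t⟫_ℝ))
      ((-2 * b * ⟪v, t⟫_ℝ + I * ⟪v, w⟫_ℝ) * cexp (-b * ‖t‖ ^ 2 + I * ⟪w, t⟫_ℝ)) t v := by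
  have hpath : HasDerivAt (fun s : ℝ ↦ t + s • v) v 0 := by
    simpa using ((hasDerivAt_id (0 : ℝ)).smul_const v).const_add t
  have hsq := hpath.norm_sq
  have hinner := (hasDerivAt_const (0 : ℝ) w).inner ℝ hpath
  have := ((hsq.ofReal_comp.const_mul (-b)).add (hinner.ofReal_comp.const_mul I)).cexp
  simp only [Pi.add_apply, zero_smul, add_zero, inner_zero_left, Complex.ofReal_pow] at this
  refine this.congr_deriv ?_
  rw [real_inner_comm t v, real_inner_comm w v]
  push_cast
  ring

variable [FiniteDimensional ℝ V] [MeasurableSpace V] [BorelSpace V]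

lemma integrable_exp_neg_mul_sq_norm {b : ℝ} (hb : 0 < b) :
    Integrable (fun t : V ↦ rexp (-b * ‖t‖ ^ 2)) := by
  have := (GaussianFourier.integrable_cexp_neg_mul_sq_norm_add (V := V) (b := b)
    (by simpa using hb) 0 0).norm
  simpa [Complex.norm_exp, ← Complex.ofReal_pow] using this

lemma integrable_norm_mul_exp_neg_mul_sq_norm {b : ℝ} (hb : 0 < b) :
    Integrable (fun t : V ↦ ‖t‖ * rexp (-b * ‖t‖ ^ 2)) := by
  refine ((integrable_exp_neg_mul_sq_norm (half_pos hb)).const_mul (√b)⁻¹).mono'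
    (by fun_prop) (.of_forall fun t ↦ ?_)
  rw [norm_of_nonneg (by positivity)]
  exact mul_exp_neg_mul_sq_le hb ‖t‖

lemma integrable_inner_mul_cexp_neg_mul_sq_norm_add_I_mul {b : ℂ} (hb : 0 < b.re) (w v : V) :
    Integrable (fun t : V ↦ ⟪v, t⟫_ℝ * cexp (-b * ‖t‖ ^ 2 + I * ⟪w, t⟫_ℝ)) := by
  refine ((integrable_norm_mul_exp_neg_mul_sq_norm hb).const_mul ‖v‖).mono'
    (by fun_prop) (.of_forall fun t ↦ ?_)
  rw [norm_mul, norm_cexp_neg_mul_sq_norm_add_I_mul, Complex.norm_real, norm_eq_abs, ← mul_assoc]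
  gcongr
  exact abs_real_inner_le_norm v t

lemma integral_inner_mul_cexp_neg_mul_sq_norm_add_I_mul {b : ℂ} (hb : 0 < b.re) (w v : V) :
    ∫ t : V, ⟪v, t⟫_ℝ * cexp (-b * ‖t‖ ^ 2 + I * ⟪w, t⟫_ℝ)
      = I * ⟪v, w⟫_ℝ / (2 * b) * ∫ t : V, cexp (-b * ‖t‖ ^ 2 + I * ⟪w, t⟫_ℝ) := by
  set g : V → ℂ := fun t ↦ cexp (-b * ‖t‖ ^ 2 + I * ⟪w, t⟫_ℝ)
  show ∫ t, ⟪v, t⟫_ℝ * g t = I * ⟪v, w⟫_ℝ / (2 * b) * ∫ t, g t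
  have hb0 : b ≠ 0 := fun h ↦ by simp [h] at hb
  have hg : Integrable g := GaussianFourier.integrable_cexp_neg_mul_sq_norm_add hb I w
  have hmom := integrable_inner_mul_cexp_neg_mul_sq_norm_add_I_mul hb w v
  have hsplit : ∀ t, (-2 * b * ⟪v, t⟫_ℝ + I * ⟪v, w⟫_ℝ) * g t
      = -2 * b * (⟪v, t⟫_ℝ * g t) + I * ⟪v, w⟫_ℝ * g t := fun t ↦ by ring
  have hderiv : Integrable (fun t ↦ (-2 * b * ⟪v, t⟫_ℝ + I * ⟪v, w⟫_ℝ) * g t) :=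
    ((hmom.const_mul _).add (hg.const_mul _)).congr (.of_forall fun t ↦ (hsplit t).symm)
  have hzero : ∫ t, (-2 * b * ⟪v, t⟫_ℝ + I * ⟪v, w⟫_ℝ) * g t = 0 := by
    simpa [g] using integral_bilinear_hasLineDerivAt_right_eq_neg_left_of_integrable
      (f := fun _ ↦ (1 : ℂ)) (f' := 0) (B := ContinuousLinearMap.mul ℝ ℂ) (v := v)
      (by simp) (by simpa [g] using hderiv) (by simpa [g] using hg)
      (fun _ _ ↦ hasDerivAt_const _ _)
      (fun t _ ↦ hasLineDerivAt_cexp_neg_mul_sq_norm_add_I_mul b w t v)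
  simp only [hsplit] at hzero
  rw [integral_add (hmom.const_mul _) (hg.const_mul _), integral_const_mul,
    integral_const_mul] at hzero
  field_simp
  linear_combination -hzero

lemma integral_cexp_neg_mul_sq_norm_add_I_mul {b : ℝ} (hb : 0 < b) (w : V) :
    ∫ t : V, cexp (-b * ‖t‖ ^ 2 + I * ⟪w, t⟫_ℝ)
      = ((π / b) ^ (Module.finrank ℝ V / 2 : ℝ) * rexp (-‖w‖ ^ 2 / (4 * b)) : ℝ) := by
  rw [GaussianFourier.integral_cexp_neg_mul_sq_norm_add (by simpa using hb),
    Complex.ofReal_mul, Complex.ofReal_cpow (by positivity), Complex.ofReal_exp]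
  push_cast
  simp

lemma integrable_exp_neg_mul_sq_norm_mul_cos_add_sin_smul {b : ℝ} (hb : 0 < b) (x : V) :
    Integrable (fun t : V ↦ (rexp (-b * ‖t‖ ^ 2) * (cos ⟪t, x⟫_ℝ + sin ⟪t, x⟫_ℝ)) • t) := by
  refine ((integrable_norm_mul_exp_neg_mul_sq_norm hb).const_mul 2).mono'
    (by fun_prop) (.of_forall fun t ↦ ?_)
  have hcs : |cos ⟪t, x⟫_ℝ + sin ⟪t, x⟫_ℝ| ≤ 2 := by
    linarith [abs_add_le (cos ⟪t, x⟫_ℝ) (sin ⟪t, x⟫_ℝ), abs_cos_le_one ⟪t, x⟫_ℝ,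
      abs_sin_le_one ⟪t, x⟫_ℝ]
  rw [norm_smul, norm_mul, norm_of_nonneg (exp_pos _).le, norm_eq_abs]
  calc rexp (-b * ‖t‖ ^ 2) * |cos ⟪t, x⟫_ℝ + sin ⟪t, x⟫_ℝ| * ‖t‖
      ≤ rexp (-b * ‖t‖ ^ 2) * 2 * ‖t‖ := by gcongr
    _ = 2 * (‖t‖ * rexp (-b * ‖t‖ ^ 2)) := by ring

theorem integral_exp_neg_mul_sq_norm_mul_cos_add_sin_smul {b : ℝ} (hb : 0 < b) (x : V) :
    ∫ t : V, (rexp (-b * ‖t‖ ^ 2) * (cos ⟪t, x⟫_ℝ + sin ⟪t, x⟫_ℝ)) • t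
      = ((π / b) ^ (Module.finrank ℝ V / 2 : ℝ) / (2 * b) * rexp (-‖x‖ ^ 2 / (4 * b))) • x := by
  set G : V → ℂ := fun t ↦ cexp (-b * ‖t‖ ^ 2 + I * ⟪x, t⟫_ℝ)
  refine ext_inner_left ℝ fun v ↦ ?_
  have hre : ∀ t : V, rexp (-b * ‖t‖ ^ 2) * (cos ⟪t, x⟫_ℝ + sin ⟪t, x⟫_ℝ) * ⟪v, t⟫_ℝ
      = ((1 - I) * (⟪v, t⟫_ℝ * G t)).re := fun t ↦ by
    have hG : G t = rexp (-b * ‖t‖ ^ 2) * cexp (I * ⟪t, x⟫_ℝ) := by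
      simp only [G, Complex.exp_add, real_inner_comm x t]
      push_cast
      rfl
    rw [hG, cos_add_sin_eq_re, show (1 - I) * (⟪v, t⟫_ℝ * (rexp (-b * ‖t‖ ^ 2) *
      cexp (I * ⟪t, x⟫_ℝ))) = (⟪v, t⟫_ℝ * rexp (-b * ‖t‖ ^ 2) : ℝ) * ((1 - I) *
      cexp (I * ⟪t, x⟫_ℝ)) by push_cast; ring, Complex.re_ofReal_mul]
    ring
  have hmom : Integrable (fun t ↦ (1 - I) * (⟪v, t⟫_ℝ * G t)) :=
    (integrable_inner_mul_cexp_neg_mul_sq_norm_add_I_mul (by simpa using hb) x v).const_mul _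
  have hre_int := integral_re hmom
  simp only [RCLike.re_to_complex] at hre_int
  rw [← integral_inner (integrable_exp_neg_mul_sq_norm_mul_cos_add_sin_smul hb x)]
  simp_rw [inner_smul_right]
  rw [integral_congr_ae (.of_forall hre), hre_int, integral_const_mul,
    integral_inner_mul_cexp_neg_mul_sq_norm_add_I_mul (by simpa using hb),
    integral_cexp_neg_mul_sq_norm_add_I_mul hb]
  set P := (π / b) ^ (Module.finrank ℝ V / 2 : ℝ)
  set E := rexp (-‖x‖ ^ 2 / (4 * b))
  rw [show (1 - I) * (I * ⟪v, x⟫_ℝ / (2 * b) * (P * E : ℝ))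
      = (P / (2 * b) * E * ⟪v, x⟫_ℝ : ℝ) * (1 + I) by
    push_cast
    linear_combination (-(⟪v, x⟫_ℝ : ℂ) / (2 * b) * P * E) * Complex.I_mul_I,
    Complex.re_ofReal_mul]
  simp

theorem integral_vec_tPsi_CSplus_gaussian_general (d : ℕ) (a : ℝ) (ha : 0 < a)
    (x : EuclideanSpace ℝ (Fin d)) :
    ∫ t : EuclideanSpace ℝ (Fin d),
        (stdNormalCF t * CSplus t x * Real.exp (-a * ‖t‖ ^ 2)) • t
      = ((2 * π) ^ ((d : ℝ) / 2) / (2 * a + 1) ^ ((d : ℝ) / 2 + 1)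
          * Real.exp (-‖x‖ ^ 2 / (4 * a + 2))) • x := by
  have hb : 0 < a + 1 / 2 := by positivity
  have hintegrand : ∀ t : EuclideanSpace ℝ (Fin d), stdNormalCF t * CSplus t x * rexp (-a * ‖t‖ ^ 2)
      = rexp (-(a + 1 / 2) * ‖t‖ ^ 2) * (cos ⟪t, x⟫_ℝ + sin ⟪t, x⟫_ℝ) := fun t ↦ by
    rw [stdNormalCF, CSplus, mul_right_comm, ← exp_add]
    ring_nf
  simp_rw [hintegrand]
  rw [integral_exp_neg_mul_sq_norm_mul_cos_add_sin_smul hb, finrank_euclideanSpace_fin]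
  have h2a : 0 < 2 * a + 1 := by positivity
  rw [show π / (a + 1 / 2) = 2 * π / (2 * a + 1) by field_simp, div_rpow (by positivity) h2a.le,
    rpow_add_one h2a.ne', show 4 * (a + 1 / 2) = 4 * a + 2 by ring,
    show 2 * (a + 1 / 2) = 2 * a + 1 by ring, div_div]

/-- The vector-valued integral
`∫_{ℝ^d} t ψ(t) CS⁺(t,x) e^{-a‖t‖²} dt = (2π)^{d/2} (2a+1)^{-(d/2+1)} x e^{-‖x‖²/(4a+2)}`. -/
theorem integral_vec_tPsi_CSplus_gaussian (d : ℕ) (hd : 1 ≤ d) (a : ℝ) (ha : 0 < a)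
    (x : EuclideanSpace ℝ (Fin d)) :
    ∫ t : EuclideanSpace ℝ (Fin d),
        (stdNormalCF t * CSplus t x * Real.exp (-a * ‖t‖ ^ 2)) • t
      = ((2 * π) ^ ((d : ℝ) / 2) / (2 * a + 1) ^ ((d : ℝ) / 2 + 1)
          * Real.exp (-‖x‖ ^ 2 / (4 * a + 2))) • x :=
  integral_vec_tPsi_CSplus_gaussian_general d a ha x
end

section
/- Let d ≥ 1 and a > 0. Then ∫_{ℝ^d} ( d − (d + d‖t‖² − ‖t‖⁴ + ‖t‖⁶/2) exp(−‖t‖²) ) exp(−a‖t‖²) dt = (π/a)^{d/2} d − (π/(a+1))^{d/2} · d · (16a³ + (8d+48)a² + (12d+40)a + d² + 10d + 16) / (16(a+1)³). (This is the expectation E[T_{∞,a}] of the limit null distribution of the test statistic.) -/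
/-!
The integrand is a linear combination of the Gaussian moments `∫ ‖t‖^(2k) exp(-b‖t‖²)` with
`b = a` and `b = a + 1`, `k ≤ 3`. In polar coordinates each moment is a one-dimensional Gamma
integral times the surface area of the unit sphere; dividing by the case `k = 0`, which is the
Gaussian integral `(π/b)^(d/2)`, eliminates that area and leaves `(π/b)^(d/2) (d/2)_k / b^k`,
where `(d/2)_k` is the rising factorial.
-/

open MeasureTheory Real

theorem Real.Gamma_add_nat_eq_ascPochhammer_eval_mul {s : ℝ} (hs : 0 < s) (k : ℕ) :
    Gamma (s + k) = (ascPochhammer ℝ k).eval s * Gamma s := by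
  induction k with
  | zero => simp
  | succ k ih =>
    rw [Nat.cast_succ, ← add_assoc, Gamma_add_one (by positivity), ih, ascPochhammer_succ_eval]
    ring

theorem integral_Ioi_pow_mul_exp_neg_mul_sq (m : ℕ) {b : ℝ} (hb : 0 < b) :
    ∫ y in Set.Ioi (0 : ℝ), y ^ m * exp (-b * y ^ 2)
      = Gamma ((m + 1) / 2) / 2 * b ^ (-((m + 1 : ℝ) / 2)) := by
  have h := integral_rpow_mul_exp_neg_mul_rpow two_pos (neg_one_lt_zero.trans_le m.cast_nonneg) hb
  simp only [rpow_natCast, rpow_two, neg_div] at h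
  rw [h]
  ring

section GaussianMoments

variable {V : Type*} [NormedAddCommGroup V] [InnerProductSpace ℝ V] [FiniteDimensional ℝ V]
  [MeasurableSpace V] [BorelSpace V] [Nontrivial V] {b : ℝ}

theorem integrable_norm_pow_mul_exp_neg_mul_sq (k : ℕ) (hb : 0 < b) :
    Integrable fun x : V => ‖x‖ ^ k * exp (-b * ‖x‖ ^ 2) := by
  rw [integrable_fun_norm_addHaar volume (f := fun r => r ^ k * exp (-b * r ^ 2))]
  simp_rw [smul_eq_mul, ← mul_assoc, ← pow_add]
  simpa only [rpow_natCast] using integrableOn_rpow_mul_exp_neg_mul_sq hb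
    (neg_one_lt_zero.trans_le (Module.finrank ℝ V - 1 + k).cast_nonneg)

theorem integral_norm_pow_mul_exp_neg_mul_sq (k : ℕ) (hb : 0 < b) :
    ∫ x : V, ‖x‖ ^ k * exp (-b * ‖x‖ ^ 2)
      = Module.finrank ℝ V * volume.real (Metric.ball (0 : V) 1) / 2
        * Gamma ((Module.finrank ℝ V + k) / 2) * b ^ (-((Module.finrank ℝ V + k : ℝ) / 2)) := by
  have hn : 0 < Module.finrank ℝ V := Module.finrank_pos
  rw [integral_fun_norm_addHaar volume (fun r => r ^ k * exp (-b * r ^ 2))]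
  simp_rw [smul_eq_mul, ← mul_assoc, ← pow_add]
  rw [integral_Ioi_pow_mul_exp_neg_mul_sq _ hb, Nat.cast_add, Nat.cast_pred hn,
    sub_add_eq_add_sub, sub_add_cancel, nsmul_eq_mul]
  ring

theorem integral_norm_pow_two_mul_mul_exp_neg_mul_sq (k : ℕ) (hb : 0 < b) :
    ∫ x : V, ‖x‖ ^ (2 * k) * exp (-b * ‖x‖ ^ 2)
      = (π / b) ^ (Module.finrank ℝ V / 2 : ℝ)
        * (ascPochhammer ℝ k).eval (Module.finrank ℝ V / 2 : ℝ) / b ^ k := by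
  have hn : (0 : ℝ) < Module.finrank ℝ V / 2 := by
    have : 0 < Module.finrank ℝ V := Module.finrank_pos
    positivity
  have hgauss := integral_norm_pow_mul_exp_neg_mul_sq (V := V) 0 hb
  simp only [pow_zero, one_mul, CharP.cast_eq_zero, add_zero,
    GaussianFourier.integral_rexp_neg_mul_sq_norm hb] at hgauss
  rw [integral_norm_pow_mul_exp_neg_mul_sq _ hb, hgauss, Nat.cast_mul, Nat.cast_two,
    show ((Module.finrank ℝ V : ℝ) + 2 * k) / 2 = Module.finrank ℝ V / 2 + k by ring,
    Gamma_add_nat_eq_ascPochhammer_eval_mul hn, neg_add, rpow_add hb, rpow_neg hb.le (k : ℝ),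
    rpow_natCast]
  ring

end GaussianMoments

/-- Theorem 3.3. The expectation `E[T_{∞,a}]` of the limit null
distribution: `∫ tr K(t,t) w_a(t) dt` equals the stated closed form. -/
theorem expectation_limit_null_distribution (d : ℕ) (hd : 1 ≤ d) (a : ℝ) (ha : 0 < a) :
    ∫ t : EuclideanSpace ℝ (Fin d),
        ((d : ℝ) - ((d : ℝ) + (d : ℝ) * ‖t‖ ^ 2 - ‖t‖ ^ 4 + ‖t‖ ^ 6 / 2)
            * Real.exp (-‖t‖ ^ 2)) * Real.exp (-a * ‖t‖ ^ 2)
      = (π / a) ^ ((d : ℝ) / 2) * (d : ℝ)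
        - (π / (a + 1)) ^ ((d : ℝ) / 2)
            * ((d : ℝ) * (16 * a ^ 3 + (8 * (d : ℝ) + 48) * a ^ 2
                + (12 * (d : ℝ) + 40) * a + (d : ℝ) ^ 2 + 10 * (d : ℝ) + 16)
              / (16 * (a + 1) ^ 3)) := by
  have : Nontrivial (EuclideanSpace ℝ (Fin d)) :=
    Module.nontrivial_of_finrank_pos (R := ℝ) (by rw [finrank_euclideanSpace_fin]; omega)
  have ha1 : 0 < a + 1 := by linarith
  set M : ℝ → ℕ → EuclideanSpace ℝ (Fin d) → ℝ :=
    fun b k t => ‖t‖ ^ (2 * k) * exp (-b * ‖t‖ ^ 2) with hM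
  have hsplit : ∀ t, ((d : ℝ) - ((d : ℝ) + (d : ℝ) * ‖t‖ ^ 2 - ‖t‖ ^ 4 + ‖t‖ ^ 6 / 2)
      * Real.exp (-‖t‖ ^ 2)) * Real.exp (-a * ‖t‖ ^ 2)
      = d * M a 0 t
        - (d * M (a + 1) 0 t + d * M (a + 1) 1 t - M (a + 1) 2 t + M (a + 1) 3 t / 2) := by
    intro t
    have hexp : exp (-(a + 1) * ‖t‖ ^ 2) = exp (-‖t‖ ^ 2) * exp (-a * ‖t‖ ^ 2) := by
      rw [← exp_add]; ring_nf
    simp only [hM, hexp]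
    ring
  have hint₀ : Integrable (M a 0) := integrable_norm_pow_mul_exp_neg_mul_sq 0 ha
  have hint₁ : ∀ k, Integrable (M (a + 1) k) := fun k =>
    integrable_norm_pow_mul_exp_neg_mul_sq _ ha1
  simp only [hsplit]
  rw [integral_sub (by fun_prop) (by fun_prop), integral_add (by fun_prop) (by fun_prop),
    integral_sub (by fun_prop) (by fun_prop), integral_add (by fun_prop) (by fun_prop)]
  simp only [integral_const_mul, integral_div, hM,
    integral_norm_pow_two_mul_mul_exp_neg_mul_sq _ ha,
    integral_norm_pow_two_mul_mul_exp_neg_mul_sq _ ha1, finrank_euclideanSpace_fin,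
    ascPochhammer_succ_eval, ascPochhammer_zero, Polynomial.eval_one]
  field_simp
  ring
end
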